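/- arXiv:1511.02390 — 4 statements merged into one kernel-verified Lean document; each statement's English description precedes it below -/
import Mathlib

section
/- If each path-incidence vector a_p ∈ {0,1}ⁿ has at most L nonzero entries, then the gradient of ψ(t) = log(∑_{p∈P} exp(-⟨a_p, t⟩)) is Lipschitz continuous in the Euclidean norm with constant at most L². -/
/-!
With Gibbs weights `w_p(u) ∝ exp (-⟪a_p, u⟫)`, the gradient of `ψ` is minus the Gibbs mean
`∑ w_p a_p`, and the derivative of that mean in direction `v` is minus the Gibbs covariance of
`a_p` with `⟪a_p, v⟫`. Weighted Cauchy–Schwarz together with "variance ≤ second moment" bounds its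
norm by `∑ w_p ‖a_p‖² ‖v‖ ≤ max_p ‖a_p‖² ‖v‖`, and a 0/1 vector with at most `L` nonzero entries
has `‖a_p‖² ≤ L ≤ L²`. The mean value theorem turns the derivative bound into the Lipschitz bound.
-/

open Finset RealInnerProductSpace

section WeightedSums

variable {ι E : Type*} [Fintype ι] [NormedAddCommGroup E] [InnerProductSpace ℝ E]

theorem sum_mul_sub_sq_le_sum_mul_sq (w x : ι → ℝ) (hw : ∑ i, w i = 1) :
    ∑ i, w i * (∑ j, w j * x j - x i) ^ 2 ≤ ∑ i, w i * x i ^ 2 := by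
  set m := ∑ j, w j * x j
  have hvar : ∑ i, w i * (m - x i) ^ 2 = ∑ i, w i * x i ^ 2 - m ^ 2 := by
    have hterm : ∀ i, w i * (m - x i) ^ 2 = m ^ 2 * w i - 2 * m * (w i * x i) + w i * x i ^ 2 :=
      fun i => by ring
    simp only [hterm, sum_add_distrib, sum_sub_distrib, ← mul_sum, hw]
    ring
  linarith [sq_nonneg m]

theorem norm_sum_mul_inner_sub_smul_le (w : ι → ℝ) (hw₀ : ∀ i, 0 ≤ w i) (hw₁ : ∑ i, w i = 1)
    (b : ι → E) (v : E) :
    ‖∑ i, (w i * ⟪∑ j, w j • b j - b i, v⟫) • b i‖ ≤ (∑ i, w i * ‖b i‖ ^ 2) * ‖v‖ := by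
  set x : ι → ℝ := fun i => ⟪b i, v⟫
  set M := ∑ i, w i * ‖b i‖ ^ 2
  have hM : 0 ≤ M := sum_nonneg fun i _ => mul_nonneg (hw₀ i) (sq_nonneg _)
  have hcoef : ∀ i, ⟪∑ j, w j • b j - b i, v⟫ = ∑ j, w j * x j - x i := fun i => by
    simp only [x, inner_sub_left, sum_inner, real_inner_smul_left]
  have hsecond : ∑ i, w i * x i ^ 2 ≤ M * ‖v‖ ^ 2 := by
    rw [sum_mul]
    refine sum_le_sum fun i _ => ?_
    rw [mul_assoc, ← mul_pow]
    refine mul_le_mul_of_nonneg_left ?_ (hw₀ i)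
    rw [← sq_abs]
    exact pow_le_pow_left₀ (abs_nonneg _) (abs_real_inner_le_norm _ _) 2
  have hCS : (∑ i, w i * |∑ j, w j * x j - x i| * ‖b i‖) ^ 2 ≤
      (∑ i, w i * (∑ j, w j * x j - x i) ^ 2) * M :=
    sum_sq_le_sum_mul_sum_of_sq_le_mul _ (fun i _ => mul_nonneg (hw₀ i) (sq_nonneg _))
      (fun i _ => mul_nonneg (hw₀ i) (sq_nonneg _)) fun i _ =>
        le_of_eq (by rw [mul_pow, mul_pow, sq_abs]; ring)
  have hsum : (∑ i, w i * |∑ j, w j * x j - x i| * ‖b i‖) ^ 2 ≤ (M * ‖v‖) ^ 2 :=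
    calc _ ≤ (∑ i, w i * (∑ j, w j * x j - x i) ^ 2) * M := hCS
      _ ≤ (M * ‖v‖ ^ 2) * M :=
        mul_le_mul_of_nonneg_right ((sum_mul_sub_sq_le_sum_mul_sq w x hw₁).trans hsecond) hM
      _ = (M * ‖v‖) ^ 2 := by ring
  calc ‖∑ i, (w i * ⟪∑ j, w j • b j - b i, v⟫) • b i‖
      ≤ ∑ i, ‖(w i * ⟪∑ j, w j • b j - b i, v⟫) • b i‖ := norm_sum_le _ _
    _ = ∑ i, w i * |∑ j, w j * x j - x i| * ‖b i‖ := by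
        refine sum_congr rfl fun i _ => ?_
        rw [norm_smul, hcoef, Real.norm_eq_abs, abs_mul, abs_of_nonneg (hw₀ i)]
    _ ≤ M * ‖v‖ := le_of_pow_le_pow_left₀ two_ne_zero (by positivity) hsum

end WeightedSums

noncomputable section GibbsWeights

variable {P E : Type*} [Fintype P] [NormedAddCommGroup E] [InnerProductSpace ℝ E] (a : P → E)

def partitionFn (u : E) : ℝ := ∑ p, Real.exp (-⟪a p, u⟫)

def gibbsWeight (u : E) (p : P) : ℝ := Real.exp (-⟪a p, u⟫) / partitionFn a u

def gibbsMean (u : E) : E := ∑ p, gibbsWeight a u p • a p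

variable [Nonempty P] (u : E)

theorem partitionFn_pos : 0 < partitionFn a u :=
  sum_pos (fun _ _ => Real.exp_pos _) univ_nonempty

theorem gibbsWeight_nonneg (p : P) : 0 ≤ gibbsWeight a u p :=
  div_nonneg (Real.exp_pos _).le (partitionFn_pos a u).le

theorem sum_gibbsWeight : ∑ p, gibbsWeight a u p = 1 := by
  simp only [gibbsWeight]
  rw [← sum_div]
  exact div_self (partitionFn_pos a u).ne'

theorem gibbsWeight_eq_exp (p : P) :
    gibbsWeight a u p = Real.exp (-⟪a p, u⟫ - Real.log (partitionFn a u)) := by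
  rw [Real.exp_sub, Real.exp_log (partitionFn_pos a u), gibbsWeight]

theorem hasFDerivAt_log_partitionFn :
    HasFDerivAt (fun u => Real.log (partitionFn a u)) (-innerSL ℝ (gibbsMean a u)) u := by
  have hZ : HasFDerivAt (partitionFn a) (∑ p, Real.exp (-⟪a p, u⟫) • -innerSL ℝ (a p)) u :=
    HasFDerivAt.fun_sum fun p _ => ((innerSL ℝ (a p)).hasFDerivAt.neg).exp
  refine (hZ.log (partitionFn_pos a u).ne').congr_fderiv ?_
  ext v
  simp only [gibbsMean, gibbsWeight, FunLike.coe_smul, FunLike.coe_sum, FunLike.coe_neg,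
    Pi.smul_apply, Finset.sum_apply, Pi.neg_apply, innerSL_apply_apply, sum_inner,
    real_inner_smul_left, smul_eq_mul, smul_neg, mul_sum, ← sum_neg_distrib]
  refine sum_congr rfl fun p _ => ?_
  ring

theorem hasGradientAt_log_partitionFn [CompleteSpace E] :
    HasGradientAt (fun u => Real.log (partitionFn a u)) (-gibbsMean a u) u := by
  rw [hasGradientAt_iff_hasFDerivAt]
  refine (hasFDerivAt_log_partitionFn a u).congr_fderiv ?_
  ext v
  simp

theorem hasFDerivAt_gibbsWeight (p : P) :
    HasFDerivAt (fun u => gibbsWeight a u p)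
      (gibbsWeight a u p • innerSL ℝ (gibbsMean a u - a p)) u := by
  have h := (((innerSL ℝ (a p)).hasFDerivAt (x := u)).neg.sub
    (hasFDerivAt_log_partitionFn a u)).exp
  convert h using 1
  · exact funext fun x => gibbsWeight_eq_exp a x p
  · rw [gibbsWeight_eq_exp]
    ext v
    simp only [map_sub, smul_apply, sub_apply, coe_innerSL_apply, smul_eq_mul, Pi.sub_apply,
      Pi.neg_apply, sub_neg_eq_add, smul_add, smul_neg, add_apply, neg_apply]
    ring

theorem hasFDerivAt_gibbsMean :
    HasFDerivAt (gibbsMean a)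
      (∑ p, (gibbsWeight a u p • innerSL ℝ (gibbsMean a u - a p)).smulRight (a p)) u :=
  HasFDerivAt.fun_sum fun p _ => (hasFDerivAt_gibbsWeight a u p).smul_const (a p)

theorem norm_gibbsMean_fderiv_le {C : ℝ} (hC : ∀ p, ‖a p‖ ^ 2 ≤ C) :
    ‖∑ p, (gibbsWeight a u p • innerSL ℝ (gibbsMean a u - a p)).smulRight (a p)‖ ≤ C := by
  have hmoment : ∑ p, gibbsWeight a u p * ‖a p‖ ^ 2 ≤ C :=
    calc _ ≤ ∑ p, gibbsWeight a u p * C :=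
          sum_le_sum fun p _ => mul_le_mul_of_nonneg_left (hC p) (gibbsWeight_nonneg a u p)
      _ = C := by rw [← sum_mul, sum_gibbsWeight, one_mul]
  refine (ContinuousLinearMap.opNorm_le_bound _ ?_ fun v => ?_).trans hmoment
  · exact sum_nonneg fun p _ => mul_nonneg (gibbsWeight_nonneg a u p) (sq_nonneg _)
  · simpa only [gibbsMean, _root_.sum_apply, ContinuousLinearMap.smulRight_apply, smul_apply,
      coe_innerSL_apply, smul_eq_mul] using norm_sum_mul_inner_sub_smul_le (gibbsWeight a u)
        (gibbsWeight_nonneg a u) (sum_gibbsWeight a u) a v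

theorem norm_gibbsMean_sub_le {C : ℝ} (hC : ∀ p, ‖a p‖ ^ 2 ≤ C) (t s : E) :
    ‖gibbsMean a t - gibbsMean a s‖ ≤ C * ‖t - s‖ := by
  simpa only [norm_sub_rev] using convex_univ.norm_image_sub_le_of_norm_hasFDerivWithin_le
    (fun u _ => (hasFDerivAt_gibbsMean a u).hasFDerivWithinAt)
    (fun u _ => norm_gibbsMean_fderiv_le a u hC) (Set.mem_univ s) (Set.mem_univ t)

end GibbsWeights

theorem EuclideanSpace.norm_sq_eq_card_of_zero_one {ι : Type*} [Fintype ι]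
    (x : EuclideanSpace ℝ ι) (hx : ∀ i, x i = 0 ∨ x i = 1) :
    ‖x‖ ^ 2 = (Finset.univ.filter fun i => x i ≠ 0).card := by
  rw [EuclideanSpace.norm_sq_eq, card_filter, Nat.cast_sum]
  refine sum_congr rfl fun i _ => ?_
  rcases hx i with h | h <;> simp [h]

/-- if each 0-1 incidence vector `a p` has at most `L` nonzero entries,
then the gradient of `ψ(t) = log (∑ p, exp (-⟪a p, t⟫))` is Lipschitz in the
Euclidean norm with constant at most `L²`. -/
theorem stmt8 (P : Type*) [Fintype P] [Nonempty P] (n : ℕ) (L : ℕ)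
    (a : P → EuclideanSpace ℝ (Fin n))
    (ha01 : ∀ p e, a p e = 0 ∨ a p e = 1)
    (haL : ∀ p, (Finset.univ.filter fun e => a p e ≠ 0).card ≤ L) :
    ∀ t s : EuclideanSpace ℝ (Fin n),
      ‖gradient (fun u : EuclideanSpace ℝ (Fin n) =>
          Real.log (∑ p, Real.exp (-⟪a p, u⟫))) t -
        gradient (fun u : EuclideanSpace ℝ (Fin n) =>
          Real.log (∑ p, Real.exp (-⟪a p, u⟫))) s‖ ≤ (L : ℝ) ^ 2 * ‖t - s‖ := by
  intro t s
  have hnorm : ∀ p, ‖a p‖ ^ 2 ≤ (L : ℝ) ^ 2 := fun p => by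
    rw [EuclideanSpace.norm_sq_eq_card_of_zero_one (a p) (ha01 p)]
    exact_mod_cast (haL p).trans (Nat.le_self_pow two_ne_zero L)
  have hgrad : ∀ u, gradient (fun u : EuclideanSpace ℝ (Fin n) =>
      Real.log (∑ p, Real.exp (-⟪a p, u⟫))) u = -gibbsMean a u :=
    fun u => (hasGradientAt_log_partitionFn a u).gradient
  rw [hgrad, hgrad, neg_sub_neg, norm_sub_rev]
  exact norm_gibbsMean_sub_le a hnorm t s
end

section
/- Let ξ_p, p ∈ P, be i.i.d. Gumbel random variables with CDF exp(-e^{-ζ/γ - E}) and g : P → ℝ. Then the expectation of max_{p∈P}(-g_p + ξ_p) equals γ·log(∑_{p∈P} exp(-g_p/γ)). -/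
/-!
Independence turns the CDF of the maximum into the product of the CDFs, and a product of Gumbel
CDFs with common scale `γ` and means `c p` is again a Gumbel CDF, with mean
`γ log ∑ p, exp (c p / γ)`. A Gumbel variable with mean `c` has the law of `c - γ (log T + E)`
for `T` exponential with rate `1`, whose expectation is `c` because
`∫₀^∞ log t e^{-t} dt = Γ'(1) = -E`.
-/

open MeasureTheory ProbabilityTheory Finset Set Real
open scoped ENNReal

theorem integral_log_mul_exp_neg_Ioi :
    ∫ t in Ioi (0 : ℝ), log t * exp (-t) = -eulerMascheroniConstant := by
  have hΓ : HasDerivAt Complex.Gamma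
      (∫ t : ℝ in Ioi 0, (t : ℂ) ^ ((1 : ℂ) - 1) * (log t * exp (-t))) 1 := by
    refine (Complex.hasDerivAt_GammaIntegral (by simp)).congr_of_eventuallyEq ?_
    filter_upwards [(isOpen_lt continuous_const Complex.continuous_re).mem_nhds
      (show (0 : ℝ) < (1 : ℂ).re by simp)] with s hs using Complex.Gamma_eq_integral hs
  have h := hΓ.unique Complex.hasDerivAt_Gamma_one
  have h' : ((∫ t in Ioi (0 : ℝ), log t * exp (-t) : ℝ) : ℂ) =
      (-eulerMascheroniConstant : ℝ) := by
    rw [← integral_complex_ofReal]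
    simpa using h
  exact_mod_cast h'

theorem integrableOn_log_mul_exp_neg_Ioi :
    IntegrableOn (fun t => log t * exp (-t)) (Ioi (0 : ℝ)) := by
  by_contra h
  have := integral_undef h
  rw [integral_log_mul_exp_neg_Ioi] at this
  linarith [one_half_lt_eulerMascheroniConstant]

theorem MeasureTheory.Measure.ext_of_Iio {α : Type*} [TopologicalSpace α] [MeasurableSpace α]
    [SecondCountableTopology α] [LinearOrder α] [OrderTopology α] [BorelSpace α]
    (μ ν : Measure α) [IsProbabilityMeasure μ] [IsProbabilityMeasure ν]
    (h : ∀ a, μ (Iio a) = ν (Iio a)) : μ = ν :=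
  ext_of_Ici μ ν fun a => by
    rw [← compl_Iio, prob_compl_eq_one_sub measurableSet_Iio,
      prob_compl_eq_one_sub measurableSet_Iio, h]

theorem ProbabilityTheory.iIndepFun.measure_sup'_lt {Ω ι β : Type*} [MeasurableSpace Ω]
    {μ : Measure Ω} [Fintype ι] [Nonempty ι] [LinearOrder β] [TopologicalSpace β]
    [OrderClosedTopology β] [MeasurableSpace β] [OpensMeasurableSpace β] {X : ι → Ω → β}
    (hX : iIndepFun X μ) (a : β) :
    μ {ω | univ.sup' univ_nonempty (X · ω) < a} = ∏ i, μ {ω | X i ω < a} := by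
  have : {ω | univ.sup' univ_nonempty (X · ω) < a} = ⋂ i, X i ⁻¹' Iio a := by
    ext ω; simp [Finset.sup'_lt_iff]
  rw [this, hX.meas_iInter fun i => ⟨Iio a, measurableSet_Iio, rfl⟩]
  rfl

theorem expMeasure_one_eq :
    expMeasure 1 = (volume.restrict (Ioi 0)).withDensity fun t => ENNReal.ofReal (exp (-t)) := by
  rw [← withDensity_indicator measurableSet_Ioi, expMeasure, gammaMeasure]
  refine withDensity_congr_ae ?_
  filter_upwards [Measure.ae_ne volume (0 : ℝ)] with t ht
  rcases ht.lt_or_gt with ht | ht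
  · simp [gammaPDF_of_neg ht, ht.not_gt]
  · simp [ht, gammaPDF, gammaPDFReal, ht.le]

theorem ae_expMeasure_one_pos : ∀ᵐ t ∂expMeasure 1, 0 < t := by
  rw [expMeasure_one_eq]
  exact (withDensity_absolutelyContinuous _ _).ae_le (ae_restrict_mem measurableSet_Ioi)

theorem expMeasure_one_Ioi {x : ℝ} (hx : 0 ≤ x) :
    expMeasure 1 (Ioi x) = ENNReal.ofReal (exp (-x)) := by
  rw [expMeasure_one_eq, withDensity_apply _ measurableSet_Ioi,
    Measure.restrict_restrict measurableSet_Ioi, Ioi_inter_Ioi, sup_eq_left.2 hx,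
    ← ofReal_integral_eq_lintegral_ofReal (integrableOn_exp_neg_Ioi x)
      (ae_of_all _ fun _ => (exp_pos _).le), integral_exp_neg_Ioi]

theorem integral_expMeasure_one {f : ℝ → ℝ} :
    ∫ t, f t ∂expMeasure 1 = ∫ t in Ioi 0, exp (-t) * f t := by
  rw [expMeasure_one_eq, integral_withDensity_eq_integral_toReal_smul
    (by fun_prop) (ae_of_all _ fun _ => ENNReal.ofReal_lt_top)]
  simp only [ENNReal.toReal_ofReal (exp_pos _).le, smul_eq_mul]

/-- Gumbel CDF with scale `γ`, parametrised by its mean `c` (its mode is `c - γ E`). -/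
noncomputable def gumbelCDF (γ c ζ : ℝ) : ℝ :=
  exp (-exp (-((ζ - c) / γ) - eulerMascheroniConstant))

theorem gumbelCDF_nonneg (γ c ζ : ℝ) : 0 ≤ gumbelCDF γ c ζ :=
  (exp_pos _).le

theorem gumbelCDF_eq_sub (γ c ζ : ℝ) : gumbelCDF γ c ζ = gumbelCDF γ 0 (ζ - c) := by
  simp only [gumbelCDF, sub_zero]

theorem prod_gumbelCDF {ι : Type*} {s : Finset ι} (hs : s.Nonempty) {γ : ℝ} (hγ : γ ≠ 0)
    (c : ι → ℝ) (ζ : ℝ) :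
    ∏ i ∈ s, gumbelCDF γ (c i) ζ =
      gumbelCDF γ (γ * log (∑ i ∈ s, exp (c i / γ))) ζ := by
  have hS : 0 < ∑ i ∈ s, exp (c i / γ) := sum_pos (fun _ _ => exp_pos _) hs
  have hsplit : ∀ a, exp (-((ζ - a) / γ) - eulerMascheroniConstant) =
      exp (-(ζ / γ) - eulerMascheroniConstant) * exp (a / γ) := fun a => by
    rw [← exp_add]; congr 1; field_simp; ring
  simp only [gumbelCDF, ← exp_sum, hsplit, ← mul_sum, sum_neg_distrib,
    mul_div_cancel_left₀ _ hγ, exp_log hS]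

theorem expMeasure_one_gumbel_lt {γ : ℝ} (hγ : 0 < γ) (c ζ : ℝ) :
    expMeasure 1 {t | c - γ * (log t + eulerMascheroniConstant) < ζ} =
      ENNReal.ofReal (gumbelCDF γ c ζ) := by
  set x := exp (-((ζ - c) / γ) - eulerMascheroniConstant)
  have hlt : ∀ t, 0 < t → (c - γ * (log t + eulerMascheroniConstant) < ζ ↔ x < t) := by
    intro t ht
    rw [← lt_log_iff_exp_lt ht, ← neg_div, neg_sub, sub_lt_iff_lt_add (a := (c - ζ) / γ),
      div_lt_iff₀ hγ]
    constructor <;> intro h <;> linarith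
  have hae : {t | c - γ * (log t + eulerMascheroniConstant) < ζ} =ᵐ[expMeasure 1] Ioi x :=
    ae_expMeasure_one_pos.mono fun t ht => propext (hlt t ht)
  rw [measure_congr hae, expMeasure_one_Ioi (exp_pos _).le, gumbelCDF]

theorem integral_expMeasure_one_gumbel (γ c : ℝ) :
    ∫ t, c - γ * (log t + eulerMascheroniConstant) ∂expMeasure 1 = c := by
  have h : ∀ t, exp (-t) * (c - γ * (log t + eulerMascheroniConstant)) =
      (c - γ * eulerMascheroniConstant) * exp (-t) - γ * (log t * exp (-t)) := fun t => by ring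
  simp only [integral_expMeasure_one, h]
  rw [integral_sub ((integrableOn_exp_neg_Ioi 0).const_mul _)
      (integrableOn_log_mul_exp_neg_Ioi.const_mul _), integral_const_mul, integral_const_mul,
    integral_exp_neg_Ioi_zero, integral_log_mul_exp_neg_Ioi]
  ring

theorem integral_eq_of_measure_lt_eq_gumbelCDF {Ω : Type*} [MeasurableSpace Ω] {μ : Measure Ω}
    [IsProbabilityMeasure μ] {X : Ω → ℝ} (hX : AEMeasurable X μ) {γ c : ℝ} (hγ : 0 < γ)
    (h : ∀ ζ, μ {ω | X ω < ζ} = ENNReal.ofReal (gumbelCDF γ c ζ)) :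
    ∫ ω, X ω ∂μ = c := by
  have : IsProbabilityMeasure (expMeasure 1) := isProbabilityMeasure_expMeasure one_pos
  have hφ : Measurable fun t : ℝ => c - γ * (log t + eulerMascheroniConstant) := by fun_prop
  have hlaw : IdentDistrib X (fun t => c - γ * (log t + eulerMascheroniConstant))
      μ (expMeasure 1) := by
    refine ⟨hX, hφ.aemeasurable, ?_⟩
    have := Measure.isProbabilityMeasure_map (μ := μ) hX
    have := Measure.isProbabilityMeasure_map (μ := expMeasure 1) hφ.aemeasurable
    refine Measure.ext_of_Iio _ _ fun ζ => ?_
    rw [Measure.map_apply_of_aemeasurable hX measurableSet_Iio,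
      Measure.map_apply hφ measurableSet_Iio]
    exact (h ζ).trans (expMeasure_one_gumbel_lt hγ c ζ).symm
  exact hlaw.integral_eq.trans (integral_expMeasure_one_gumbel γ c)

/-- for i.i.d. Gumbel noise `ξ_p` with CDF `exp (-exp (-ζ/γ - E))`,
the expectation of `max_p (-g p + ξ p)` equals `γ log (∑ p, exp (-g p / γ))`. -/
theorem stmt13 (P : Type*) [Fintype P] [Nonempty P] (γ : ℝ) (hγ : 0 < γ) (g : P → ℝ)
    (Ω : Type*) [MeasurableSpace Ω] (μ : Measure Ω) [IsProbabilityMeasure μ]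
    (ξ : P → Ω → ℝ) (hmeas : ∀ p, Measurable (ξ p))
    (hindep : iIndepFun ξ μ)
    (hcdf : ∀ p (ζ : ℝ), μ {ω | ξ p ω < ζ} =
      ENNReal.ofReal (Real.exp (-Real.exp (-(ζ / γ) - Real.eulerMascheroniConstant)))) :
    ∫ ω, (Finset.univ.sup' Finset.univ_nonempty fun p => -g p + ξ p ω) ∂μ =
      γ * Real.log (∑ p, Real.exp (-(g p) / γ)) := by
  have hξ : ∀ p ζ, μ {ω | ξ p ω < ζ} = ENNReal.ofReal (gumbelCDF γ 0 ζ) := by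
    simpa only [gumbelCDF, sub_zero] using hcdf
  have hmax : Measurable fun ω => univ.sup' univ_nonempty fun p => -g p + ξ p ω := by
    convert measurable_sup' univ_nonempty
      (f := fun p ω => -g p + ξ p ω) fun p _ => (hmeas p).const_add _ using 1
    ext ω
    rw [Finset.sup'_apply]
  refine integral_eq_of_measure_lt_eq_gumbelCDF hmax.aemeasurable hγ fun ζ => ?_
  have hshift : iIndepFun (fun p ω => -g p + ξ p ω) μ :=
    hindep.comp (fun p x => -g p + x) fun p => measurable_const_add _
  rw [hshift.measure_sup'_lt, ← prod_gumbelCDF univ_nonempty hγ.ne' fun p => -g p,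
    ENNReal.ofReal_prod_of_nonneg fun _ _ => gumbelCDF_nonneg _ _ _]
  refine prod_congr rfl fun p _ => ?_
  have hset : {ω | -g p + ξ p ω < ζ} = {ω | ξ p ω < ζ - -g p} := by
    ext ω
    rw [mem_ofPred_eq, mem_ofPred_eq, neg_add_lt_iff_lt_add, sub_neg_eq_add, add_comm]
  rw [hset, hξ, gumbelCDF_eq_sub γ (-g p)]
end

section
/- Fenchel duality for the single-level entropy model: for γ > 0, d > 0, path-edge incidence vectors a_p ∈ {0,1}ⁿ, and strictly increasing continuous costs τ_e with σ_e(f) = ∫₀^f τ_e, one has min over x ∈ S(d), f_e = ∑_p (a_p)_e x_p of [∑_e σ_e(f_e) + γ ∑_p x_p log(x_p/d)] = - min over t ∈ ℝⁿ of [γ d log(∑_p exp(-⟨a_p, t⟩/γ)) + ∑_e σ_e*(t_e)], where σ_e* is the Fenchel conjugate of σ_e. -/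
open Finset Filter Topology Real

/-!
Weak duality is the sum of two inequalities: Fenchel–Young `σ_e(f_e) + σ_e*(t_e) ≥ f_e t_e` on
each edge, and the Gibbs variational inequality
`∑ x_p c_p + γ ∑ x_p log (x_p/d) ≥ -γ d log ∑ exp (-c_p/γ)` on `S(d)`, applied with path costs
`c_p = ⟨a_p, t⟩` (note `∑ f_e t_e = ∑ x_p c_p`).

For strong duality take a primal minimizer `x` (compactness) and the edge prices
`t_e = τ_e(f_e)`. Since `σ_e` lies above its tangent lines of slope `τ_e` and the entropy is
convex, comparing `x` with points on segments towards any `z ∈ S(d)` shows that `x` also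
minimizes the free energy with costs `c_p = ⟨a_p, t⟩`, so both inequalities are tight at `(x, t)`.
-/

section Primitive

variable {τ : ℝ → ℝ}

theorem intervalIntegrable_of_continuousOn_Ici (hc : ContinuousOn τ (Set.Ici 0)) {u v : ℝ}
    (hu : 0 ≤ u) (hv : 0 ≤ v) : IntervalIntegrable τ MeasureTheory.volume u v :=
  (hc.mono fun _ hz => le_trans (le_min hu hv) hz.1).intervalIntegrable

theorem integral_add_mul_sub_le_integral (hc : ContinuousOn τ (Set.Ici 0))
    (hm : MonotoneOn τ (Set.Ici 0)) {u v : ℝ} (hu : 0 ≤ u) (hv : 0 ≤ v) :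
    (∫ z in (0:ℝ)..v, τ z) + τ v * (u - v) ≤ ∫ z in (0:ℝ)..u, τ z := by
  have hvu : τ v * (u - v) ≤ ∫ z in v..u, τ z := by
    rcases le_total v u with hle | hle
    · have := intervalIntegral.integral_mono_on hle intervalIntegrable_const
        (intervalIntegrable_of_continuousOn_Ici hc hv hu)
        fun z hz => hm hv (hv.trans hz.1) hz.1
      simpa [mul_comm] using this
    · have := intervalIntegral.integral_mono_on hle
        (intervalIntegrable_of_continuousOn_Ici hc hu hv) intervalIntegrable_const
        fun z hz => hm (hu.trans hz.1) hv hz.2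
      rw [intervalIntegral.integral_symm]
      simp only [intervalIntegral.integral_const, smul_eq_mul] at this
      linarith
  rw [← intervalIntegral.integral_interval_sub_left (intervalIntegrable_of_continuousOn_Ici hc
    le_rfl hu) (intervalIntegrable_of_continuousOn_Ici hc le_rfl hv)] at hvu
  linarith

theorem continuousOn_primitive_Ici (hc : ContinuousOn τ (Set.Ici 0)) :
    ContinuousOn (fun u => ∫ z in (0:ℝ)..u, τ z) (Set.Ici 0) := by
  have hT : Continuous fun z => τ (max z 0) :=
    hc.comp_continuous (by fun_prop) fun z => le_max_right z 0
  refine (intervalIntegral.continuous_primitive (fun _ _ => hT.intervalIntegrable _ _) 0)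
    |>.continuousOn.congr fun u hu => intervalIntegral.integral_congr fun z hz => ?_
  rw [Set.uIcc_of_le hu] at hz
  simp [max_eq_left hz.1]

end Primitive


noncomputable def conjugateOnNonneg (σ : ℝ → ℝ) (t : ℝ) : ℝ :=
  sSup {v | ∃ f, 0 ≤ f ∧ v = f * t - σ f}

section Conjugate

variable {σ τ : ℝ → ℝ}

theorem isGreatest_mul_sub_of_supporting
    (hsupp : ∀ u v, 0 ≤ u → 0 ≤ v → σ v + τ v * (u - v) ≤ σ u) {f : ℝ} (hf : 0 ≤ f) :
    IsGreatest {v | ∃ g, 0 ≤ g ∧ v = g * τ f - σ g} (f * τ f - σ f) := by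
  refine ⟨⟨f, hf, rfl⟩, ?_⟩
  rintro v ⟨g, hg, rfl⟩
  linarith [hsupp g f hg hf]

theorem conjugateOnNonneg_apply_eq
    (hsupp : ∀ u v, 0 ≤ u → 0 ≤ v → σ v + τ v * (u - v) ≤ σ u) {f : ℝ} (hf : 0 ≤ f) :
    conjugateOnNonneg σ (τ f) = f * τ f - σ f :=
  (isGreatest_mul_sub_of_supporting hsupp hf).csSup_eq

theorem mul_sub_le_conjugateOnNonneg
    (hsupp : ∀ u v, 0 ≤ u → 0 ≤ v → σ v + τ v * (u - v) ≤ σ u) (hτ : Tendsto τ atTop atTop)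
    {f : ℝ} (hf : 0 ≤ f) (t : ℝ) :
    f * t - σ f ≤ conjugateOnNonneg σ t := by
  obtain ⟨M, htM, hM⟩ := ((hτ.eventually_ge_atTop t).and (eventually_ge_atTop 0)).exists
  refine le_csSup ⟨M * τ M - σ M, ?_⟩ ⟨f, hf, rfl⟩
  rintro v ⟨g, hg, rfl⟩
  have := (isGreatest_mul_sub_of_supporting hsupp hM).2 ⟨g, hg, rfl⟩
  linarith [mul_le_mul_of_nonneg_left htM hg]

end Conjugate


theorem sub_le_mul_log_div {z y : ℝ} (hz : 0 ≤ z) (hy : 0 < y) : z - y ≤ z * log (z / y) := by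
  have := mul_le_mul_of_nonneg_left (self_sub_one_le_mul_log (div_nonneg hz hy.le)) hy.le
  rwa [mul_sub, mul_div_cancel₀ _ hy.ne', mul_one, ← mul_assoc, mul_div_cancel₀ _ hy.ne'] at this

theorem sum_mul_log_div_nonneg {ι : Type*} {s : Finset ι} {z y : ι → ℝ} (hz : ∀ i ∈ s, 0 ≤ z i)
    (hy : ∀ i ∈ s, 0 < y i) (hsum : ∑ i ∈ s, z i = ∑ i ∈ s, y i) :
    0 ≤ ∑ i ∈ s, z i * log (z i / y i) := by
  calc 0 = ∑ i ∈ s, (z i - y i) := by rw [sum_sub_distrib, hsum, sub_self]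
    _ ≤ _ := sum_le_sum fun i hi => sub_le_mul_log_div (hz i hi) (hy i hi)

theorem mul_log_div_eq_sub {u d : ℝ} (hd : d ≠ 0) : u * log (u / d) = u * log u - u * log d := by
  rcases eq_or_ne u 0 with rfl | hu
  · simp
  · rw [log_div hu hd, mul_sub]

def scaledSimplex (P : Type*) [Fintype P] (d : ℝ) : Set (P → ℝ) :=
  {x | (∀ p, 0 ≤ x p) ∧ ∑ p, x p = d}

section Simplex

variable {P : Type*} [Fintype P]

theorem convex_scaledSimplex (d : ℝ) : Convex ℝ (scaledSimplex P d) := by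
  refine fun x hx y hy a b ha hb hab => ⟨fun p => ?_, ?_⟩
  · apply_rules [add_nonneg, mul_nonneg, hx.1, hy.1]
  · simp_rw [Pi.add_apply, Pi.smul_apply]
    rw [sum_add_distrib, ← smul_sum, ← smul_sum, hx.2, hy.2, smul_eq_mul, smul_eq_mul,
      ← add_mul, hab, one_mul]

theorem isCompact_scaledSimplex (d : ℝ) : IsCompact (scaledSimplex P d) := by
  have hclosed : IsClosed (scaledSimplex P d) := by
    have : scaledSimplex P d = (⋂ p, {x | 0 ≤ x p}) ∩ {x | ∑ p, x p = d} := by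
      ext x; simp [scaledSimplex]
    rw [this]
    exact (isClosed_iInter fun p => isClosed_le continuous_const (continuous_apply p)).inter
      (isClosed_eq (by fun_prop) continuous_const)
  refine (isCompact_Icc (a := 0) (b := fun _ => d)).of_isClosed_subset hclosed
    fun x hx => ⟨hx.1, fun p => ?_⟩
  rw [← hx.2]
  exact single_le_sum (fun q _ => hx.1 q) (mem_univ p)

theorem scaledSimplex_nonempty [Nonempty P] {d : ℝ} (hd : 0 ≤ d) :
    (scaledSimplex P d).Nonempty :=
  ⟨fun _ => d / Fintype.card P, fun _ => by positivity, by
    rw [sum_const, card_univ, nsmul_eq_mul, mul_div_cancel₀ _ (by positivity)]⟩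

theorem convexOn_sum_mul_log_div {d : ℝ} (hd : d ≠ 0) :
    ConvexOn ℝ (scaledSimplex P d) fun x => ∑ p, x p * log (x p / d) := by
  have h1 : ConvexOn ℝ (Set.Ici 0) fun u : ℝ => u * log (u / d) := by
    simp_rw [mul_log_div_eq_sub hd]
    exact convexOn_mul_log.sub ((LinearMap.mulRight ℝ (log d)).concaveOn (convex_Ici 0))
  refine ⟨convex_scaledSimplex d, fun x hx y hy a b ha hb hab => ?_⟩
  simp only [Pi.add_apply, Pi.smul_apply, smul_eq_mul, mul_sum, ← sum_add_distrib]
  exact sum_le_sum fun p _ => h1.2 (hx.1 p) (hy.1 p) ha hb hab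

variable (γ d : ℝ) (c : P → ℝ)

noncomputable def freeEnergy (x : P → ℝ) : ℝ := ∑ p, x p * c p + γ * ∑ p, x p * log (x p / d)

noncomputable def gibbs (p : P) : ℝ := d * exp (-c p / γ) / ∑ q, exp (-c q / γ)

theorem gibbs_pos [Nonempty P] (hd : 0 < d) (p : P) : 0 < gibbs γ d c p := by
  unfold gibbs
  have : 0 < ∑ q, exp (-c q / γ) := sum_pos (fun _ _ => exp_pos _) univ_nonempty
  positivity

theorem sum_gibbs [Nonempty P] : ∑ p, gibbs γ d c p = d := by
  have hZ : 0 < ∑ q, exp (-c q / γ) := sum_pos (fun _ _ => exp_pos _) univ_nonempty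
  simp only [gibbs, ← sum_div, ← mul_sum, mul_div_cancel_right₀ _ hZ.ne']

theorem gibbs_mem_scaledSimplex [Nonempty P] (hd : 0 < d) : gibbs γ d c ∈ scaledSimplex P d :=
  ⟨fun p => (gibbs_pos γ d c hd p).le, sum_gibbs γ d c⟩

variable {γ d}

theorem freeEnergy_eq [Nonempty P] (hγ : γ ≠ 0) (hd : 0 < d) {x : P → ℝ}
    (hx : x ∈ scaledSimplex P d) :
    freeEnergy γ d c x = γ * ∑ p, x p * log (x p / gibbs γ d c p) -
      γ * d * log (∑ p, exp (-c p / γ)) := by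
  have hZ : 0 < ∑ q, exp (-c q / γ) := sum_pos (fun _ _ => exp_pos _) univ_nonempty
  have hpt : ∀ p, x p * log (x p / d) =
      x p * log (x p / gibbs γ d c p) - x p * c p / γ - x p * log (∑ q, exp (-c q / γ)) := by
    intro p
    rcases (hx.1 p).eq_or_lt with h | h
    · simp [← h]
    rw [log_div h.ne' hd.ne', log_div h.ne' (gibbs_pos γ d c hd p).ne', gibbs,
      log_div (by positivity) hZ.ne', log_mul hd.ne' (exp_pos _).ne', log_exp]
    field_simp
    ring
  simp only [freeEnergy, hpt, sum_sub_distrib, ← sum_mul, ← sum_div, hx.2]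
  field_simp
  ring

theorem isLeast_freeEnergy [Nonempty P] (hγ : 0 < γ) (hd : 0 < d) :
    IsLeast (freeEnergy γ d c '' scaledSimplex P d) (-(γ * d * log (∑ p, exp (-c p / γ)))) := by
  refine ⟨⟨gibbs γ d c, gibbs_mem_scaledSimplex γ d c hd, ?_⟩, ?_⟩
  · rw [freeEnergy_eq c hγ.ne' hd (gibbs_mem_scaledSimplex γ d c hd)]
    simp
  · rintro _ ⟨x, hx, rfl⟩
    rw [freeEnergy_eq c hγ.ne' hd hx]
    have := sum_mul_log_div_nonneg (s := univ) (fun p _ => hx.1 p)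
      (fun p _ => gibbs_pos γ d c hd p) (hx.2.trans (sum_gibbs γ d c).symm)
    linarith [mul_nonneg hγ.le this]

end Simplex

theorem IsMinOn.nonneg_of_convexOn_of_tendsto {E : Type*} [AddCommGroup E] [Module ℝ E]
    {F : Set E} {g h : E → ℝ} {x z : E} {φ : ℝ → ℝ} {c : ℝ}
    (hmin : IsMinOn (fun y => g y + h y) F x) (hx : x ∈ F) (hz : z ∈ F) (hh : ConvexOn ℝ F h)
    (hg : ∀ s ∈ Set.Ioc (0:ℝ) 1, g (x + s • (z - x)) - g x ≤ s * φ s)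
    (hφ : Tendsto φ (𝓝[>] 0) (𝓝 c)) :
    0 ≤ c + (h z - h x) := by
  have hslope : ∀ s ∈ Set.Ioc (0:ℝ) 1, 0 ≤ φ s + (h z - h x) := by
    intro s hs
    have hmin_s : g x + h x ≤ g (x + s • (z - x)) + h (x + s • (z - x)) :=
      hmin (hh.1.add_smul_sub_mem hx hz (Set.Ioc_subset_Icc_self hs))
    have hconv : h (x + s • (z - x)) ≤ (1 - s) * h x + s * h z := by
      have := hh.2 hx hz (sub_nonneg.2 hs.2) hs.1.le (by ring)
      rwa [show (1 - s) • x + s • z = x + s • (z - x) by module] at this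
    have : 0 ≤ s * (φ s + (h z - h x)) := by
      linarith [hg s hs]
    exact (mul_nonneg_iff_of_pos_left hs.1).1 this
  exact ge_of_tendsto (hφ.add_const _) (eventually_of_mem (Ioc_mem_nhdsGT one_pos) hslope)

theorem isLeast_image_of_add_eq_zero {α β : Type*} {A : Set α} {B : Set β} {Φ : α → ℝ}
    {D : β → ℝ} {x₀ : α} {t₀ : β} (hx₀ : x₀ ∈ A) (ht₀ : t₀ ∈ B)
    (hweak : ∀ x ∈ A, ∀ t ∈ B, 0 ≤ Φ x + D t) (hzero : Φ x₀ + D t₀ = 0) :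
    IsLeast (Φ '' A) (Φ x₀) ∧ IsLeast (D '' B) (D t₀) := by
  refine ⟨⟨⟨x₀, hx₀, rfl⟩, ?_⟩, ⟨⟨t₀, ht₀, rfl⟩, ?_⟩⟩
  · rintro _ ⟨x, hx, rfl⟩
    linarith [hweak x hx t₀ ht₀]
  · rintro _ ⟨t, ht, rfl⟩
    linarith [hweak x₀ hx₀ t ht]

section Network

variable {P E : Type*} [Fintype P]

def load (a : P → E → ℝ) (x : P → ℝ) (e : E) : ℝ := ∑ p, a p e * x p

variable {a : P → E → ℝ}

theorem load_add_smul_sub (x z : P → ℝ) (s : ℝ) (e : E) :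
    load a (x + s • (z - x)) e = load a x e + s * (load a z e - load a x e) := by
  simp only [load, Pi.add_apply, Pi.smul_apply, Pi.sub_apply, smul_eq_mul, mul_add, mul_sub,
    sum_add_distrib, sum_sub_distrib, mul_sum]
  congr 1
  congr 1 <;> exact sum_congr rfl fun _ _ => by ring

theorem load_nonneg (ha : ∀ p e, 0 ≤ a p e) {x : P → ℝ} (hx : ∀ p, 0 ≤ x p) (e : E) :
    0 ≤ load a x e :=
  sum_nonneg fun p _ => mul_nonneg (ha p e) (hx p)

variable [Fintype E]

def pathCost (a : P → E → ℝ) (t : E → ℝ) (p : P) : ℝ := ∑ e, a p e * t e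

theorem sum_load_mul (x : P → ℝ) (t : E → ℝ) :
    ∑ e, load a x e * t e = ∑ p, x p * pathCost a t p := by
  simp only [load, pathCost, sum_mul, mul_sum]
  rw [sum_comm]
  exact sum_congr rfl fun _ _ => sum_congr rfl fun _ _ => by ring

variable {σ σs τ : E → ℝ → ℝ} {γ d : ℝ}

theorem exists_isMinOn_primal [Nonempty P] (ha : ∀ p e, 0 ≤ a p e) (hd : 0 < d)
    (hσ : ∀ e, ContinuousOn (σ e) (Set.Ici 0)) :
    ∃ x ∈ scaledSimplex P d, IsMinOn (fun x => ∑ e, σ e (load a x e) +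
      γ * ∑ p, x p * log (x p / d)) (scaledSimplex P d) x := by
  refine (isCompact_scaledSimplex d).exists_isMinOn (scaledSimplex_nonempty hd.le) ?_
  refine (continuousOn_finsetSum _ fun e _ => (hσ e).comp (by unfold load; fun_prop)
    fun x hx => load_nonneg ha hx.1 e).add (Continuous.continuousOn ?_)
  simp_rw [mul_log_div_eq_sub hd.ne']
  exact continuous_const.mul (continuous_finsetSum _ fun p _ =>
    (continuous_apply p).mul_log.sub ((continuous_apply p).mul continuous_const))

theorem isMinOn_freeEnergy_of_isMinOn (ha : ∀ p e, 0 ≤ a p e) (hγ : 0 ≤ γ) (hd : d ≠ 0)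
    (hτ : ∀ e, ContinuousOn (τ e) (Set.Ici 0))
    (hsupp : ∀ e u v, 0 ≤ u → 0 ≤ v → σ e v + τ e v * (u - v) ≤ σ e u) {x : P → ℝ}
    (hx : x ∈ scaledSimplex P d)
    (hmin : IsMinOn (fun x => ∑ e, σ e (load a x e) + γ * ∑ p, x p * log (x p / d))
      (scaledSimplex P d) x) :
    IsMinOn (freeEnergy γ d (pathCost a fun e => τ e (load a x e))) (scaledSimplex P d) x := by
  intro z hz
  show freeEnergy γ d _ x ≤ freeEnergy γ d _ z
  have hxs : ∀ s ∈ Set.Ioc (0:ℝ) 1, x + s • (z - x) ∈ scaledSimplex P d := fun s hs =>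
    (convex_scaledSimplex d).add_smul_sub_mem hx hz (Set.Ioc_subset_Icc_self hs)
  have hslope : ∀ s ∈ Set.Ioc (0:ℝ) 1,
      ∑ e, σ e (load a (x + s • (z - x)) e) - ∑ e, σ e (load a x e) ≤
        s * ∑ e, τ e (load a (x + s • (z - x)) e) * (load a z e - load a x e) := by
    intro s hs
    rw [← sum_sub_distrib, mul_sum]
    refine sum_le_sum fun e _ => ?_
    have := hsupp e _ _ (load_nonneg ha hx.1 e) (load_nonneg ha (hxs s hs).1 e)
    rw [load_add_smul_sub] at this ⊢
    linear_combination this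
  have hlim : Tendsto
      (fun s : ℝ => ∑ e, τ e (load a (x + s • (z - x)) e) * (load a z e - load a x e)) (𝓝[>] 0)
      (𝓝 (∑ e, τ e (load a x e) * (load a z e - load a x e))) := by
    refine tendsto_finsetSum _ fun e _ => Tendsto.mul_const _ ?_
    refine (hτ e _ (load_nonneg ha hx.1 e)).tendsto.comp (tendsto_nhdsWithin_iff.2 ⟨?_, ?_⟩)
    · simp_rw [load_add_smul_sub]
      exact tendsto_nhdsWithin_of_tendsto_nhds
        (Continuous.tendsto' (by fun_prop) _ _ (by simp))
    · exact eventually_of_mem (Ioc_mem_nhdsGT one_pos) fun s hs =>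
        load_nonneg ha (hxs s hs).1 e
  have := hmin.nonneg_of_convexOn_of_tendsto hx hz
    ((convexOn_sum_mul_log_div hd).smul hγ) hslope hlim
  have hsplit : ∑ e, τ e (load a x e) * (load a z e - load a x e) =
      ∑ e, load a z e * τ e (load a x e) - ∑ e, load a x e * τ e (load a x e) := by
    rw [← sum_sub_distrib]
    exact sum_congr rfl fun _ _ => by ring
  simp only [freeEnergy, ← sum_load_mul]
  linarith

theorem primal_add_dual_nonneg [Nonempty P] (ha : ∀ p e, 0 ≤ a p e) (hγ : 0 < γ) (hd : 0 < d)
    (hFY : ∀ e f t, 0 ≤ f → f * t - σ e f ≤ σs e t) {x : P → ℝ} (hx : x ∈ scaledSimplex P d)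
    (t : E → ℝ) :
    0 ≤ (∑ e, σ e (load a x e) + γ * ∑ p, x p * log (x p / d)) +
      (γ * d * log (∑ p, exp (-pathCost a t p / γ)) + ∑ e, σs e (t e)) := by
  have hgibbs := (isLeast_freeEnergy (pathCost a t) hγ hd).2 ⟨x, hx, rfl⟩
  have hFY_sum : ∑ e, (load a x e * t e - σ e (load a x e)) ≤ ∑ e, σs e (t e) :=
    sum_le_sum fun e _ => hFY e _ _ (load_nonneg ha hx.1 e)
  simp only [freeEnergy, ← sum_load_mul] at hgibbs
  rw [sum_sub_distrib] at hFY_sum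
  linarith

theorem primal_add_dual_eq_zero [Nonempty P] (ha : ∀ p e, 0 ≤ a p e) (hγ : 0 < γ) (hd : 0 < d)
    (hτ : ∀ e, ContinuousOn (τ e) (Set.Ici 0))
    (hsupp : ∀ e u v, 0 ≤ u → 0 ≤ v → σ e v + τ e v * (u - v) ≤ σ e u)
    (hFY : ∀ e f, 0 ≤ f → σs e (τ e f) = f * τ e f - σ e f) {x : P → ℝ}
    (hx : x ∈ scaledSimplex P d)
    (hmin : IsMinOn (fun x => ∑ e, σ e (load a x e) + γ * ∑ p, x p * log (x p / d))
      (scaledSimplex P d) x) :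
    (∑ e, σ e (load a x e) + γ * ∑ p, x p * log (x p / d)) +
      (γ * d * log (∑ p, exp (-pathCost a (fun e => τ e (load a x e)) p / γ)) +
        ∑ e, σs e (τ e (load a x e))) = 0 := by
  have hleast := isLeast_freeEnergy (pathCost a fun e => τ e (load a x e)) hγ hd
  obtain ⟨y, hy, hy_eq⟩ := hleast.1
  have hx_eq := le_antisymm
    (hy_eq ▸ isMinOn_freeEnergy_of_isMinOn ha hγ.le hd.ne' hτ hsupp hx hmin hy)
    (hleast.2 ⟨x, hx, rfl⟩)
  simp only [freeEnergy, ← sum_load_mul] at hx_eq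
  rw [sum_congr rfl fun e _ => hFY e _ (load_nonneg ha hx.1 e), sum_sub_distrib]
  linarith

end Network

/-- Fenchel duality for the single-level entropy model:
`min_{x ∈ S(d), f = Θx} [∑ e, σ_e(f_e) + γ ∑ p, x_p log (x_p/d)]
  = - min_{t ∈ ℝⁿ} [γ d log (∑ p, exp (-⟨a_p, t⟩/γ)) + ∑ e, σ_e*(t_e)]`,
both minima being attained. -/
theorem stmt17 (P : Type*) [Fintype P] [Nonempty P] (n : ℕ)
    (a : P → Fin n → ℝ) (ha : ∀ p e, a p e = 0 ∨ a p e = 1)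
    (d γ : ℝ) (hd : 0 < d) (hγ : 0 < γ)
    (τ : Fin n → ℝ → ℝ)
    (hτcont : ∀ e, ContinuousOn (τ e) (Set.Ici 0))
    (hτmono : ∀ e, StrictMonoOn (τ e) (Set.Ici 0))
    (hτinf : ∀ e, Tendsto (τ e) atTop atTop)
    (σ : Fin n → ℝ → ℝ) (hσ : ∀ e f, σ e f = ∫ z in (0:ℝ)..f, τ e z)
    (σs : Fin n → ℝ → ℝ)
    (hσs : ∀ e t, σs e t = sSup {v : ℝ | ∃ f, 0 ≤ f ∧ v = f * t - σ e f}) :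
    ∃ vP vD : ℝ,
      IsLeast ((fun x : P → ℝ =>
          ∑ e, σ e (∑ p, a p e * x p) + γ * ∑ p, x p * Real.log (x p / d)) ''
        {x : P → ℝ | (∀ p, 0 ≤ x p) ∧ ∑ p, x p = d}) vP ∧
      IsLeast ((fun t : Fin n → ℝ =>
          γ * d * Real.log (∑ p, Real.exp (-(∑ e, a p e * t e) / γ)) +
            ∑ e, σs e (t e)) '' Set.univ) vD ∧
      vP = -vD := by
  have ha₀ : ∀ p e, 0 ≤ a p e := fun p e => by rcases ha p e with h | h <;> simp [h]
  have hsupp : ∀ e u v, 0 ≤ u → 0 ≤ v → σ e v + τ e v * (u - v) ≤ σ e u := fun e u v hu hv => by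
    simpa only [hσ] using integral_add_mul_sub_le_integral (hτcont e) (hτmono e).monotoneOn hu hv
  have hσcont : ∀ e, ContinuousOn (σ e) (Set.Ici 0) := fun e => by
    simpa only [← hσ] using continuousOn_primitive_Ici (hτcont e)
  have hconj : ∀ e, σs e = conjugateOnNonneg (σ e) := fun e => funext (hσs e)
  obtain ⟨x, hx, hmin⟩ := exists_isMinOn_primal (γ := γ) ha₀ hd hσcont
  have hweak := fun y (hy : y ∈ scaledSimplex P d) t (_ : t ∈ Set.univ) =>
    primal_add_dual_nonneg ha₀ hγ hd
      (fun e f t hf => hconj e ▸ mul_sub_le_conjugateOnNonneg (hsupp e) (hτinf e) hf t) hy t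
  have hzero := primal_add_dual_eq_zero ha₀ hγ hd hτcont hsupp
    (fun e f hf => hconj e ▸ conjugateOnNonneg_apply_eq (hsupp e) hf) hx hmin
  obtain ⟨hprimal, hdual⟩ := isLeast_image_of_add_eq_zero hx (Set.mem_univ _) hweak hzero
  exact ⟨_, _, hprimal, hdual, by linarith⟩
end

section
/- In the strictly increasing cost case, the dual problem min_{t} [γ d log(∑_p exp(-⟨a_p,t⟩/γ)) + ∑_e σ_e*(t_e)] has a unique solution t*, and its components satisfy t*_e = τ_e(f*_e), where f* is the edge flow of the unique primal optimum. -/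
/-!
Compactness and strict convexity give a unique primal optimum `x*`. Its coordinates are positive,
because the entropy has slope `-∞` at `0` while the potentials `σ_e` are Lipschitz on `[0, d]`;
hence `x*` satisfies the first-order condition `x*_p ∝ exp (-(∑ e, a p e τ_e(f*_e)) / γ)`, and
every edge flow `f*_e` is positive. For `t* = τ(f*)` this makes Gibbs' inequality and the
Fenchel–Young inequalities `f t - σ_e f ≤ σ_e* t` equalities, so `D t* = -P x*`, while for every
`t` the same inequalities give `-P x* ≤ D t`. If `D t = -P x*`, every Fenchel–Young inequality at
`f*` is tight, so `f*_e > 0` maximises `f ↦ f t_e - σ_e f` and its derivative `t_e - τ_e(f*_e)`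
vanishes.
-/

open Finset Filter Topology Real

section Potential

variable {τ : ℝ → ℝ}

/-- `τ` extended from `[0, ∞)` to `ℝ` by `τ 0`, so that its primitive is `C¹` on all of `ℝ`. -/
noncomputable def extendCost (τ : ℝ → ℝ) (z : ℝ) : ℝ := τ (max z 0)

noncomputable def potential (τ : ℝ → ℝ) (f : ℝ) : ℝ := ∫ z in (0 : ℝ)..f, extendCost τ z

lemma extendCost_of_nonneg {z : ℝ} (hz : 0 ≤ z) : extendCost τ z = τ z := by
  rw [extendCost, max_eq_left hz]

lemma continuous_extendCost (hc : ContinuousOn τ (Set.Ici 0)) : Continuous (extendCost τ) :=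
  hc.comp_continuous (continuous_id.max continuous_const) fun _ => Set.mem_Ici.2 (le_max_right _ _)

lemma monotone_extendCost (hm : MonotoneOn τ (Set.Ici 0)) : Monotone (extendCost τ) :=
  fun _ _ hxy => hm (Set.mem_Ici.2 (le_max_right _ _)) (Set.mem_Ici.2 (le_max_right _ _))
    (max_le_max_right 0 hxy)

lemma potential_eqOn (τ : ℝ → ℝ) :
    Set.EqOn (fun f => ∫ z in (0 : ℝ)..f, τ z) (potential τ) (Set.Ici 0) := fun f hf =>
  intervalIntegral.integral_congr fun z hz => by
    rw [Set.uIcc_of_le hf] at hz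
    exact (extendCost_of_nonneg hz.1).symm

lemma hasDerivAt_potential (hc : ContinuousOn τ (Set.Ici 0)) (f : ℝ) :
    HasDerivAt (potential τ) (extendCost τ f) f :=
  (continuous_extendCost hc).integral_hasStrictDerivAt 0 f |>.hasDerivAt

lemma continuous_potential (hc : ContinuousOn τ (Set.Ici 0)) : Continuous (potential τ) :=
  continuous_iff_continuousAt.2 fun f => (hasDerivAt_potential hc f).continuousAt

lemma convexOn_potential (hc : ContinuousOn τ (Set.Ici 0)) (hm : MonotoneOn τ (Set.Ici 0)) :
    ConvexOn ℝ Set.univ (potential τ) := by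
  refine Monotone.convexOn_univ_of_deriv (fun f => (hasDerivAt_potential hc f).differentiableAt) ?_
  rw [funext fun f => (hasDerivAt_potential hc f).deriv]
  exact monotone_extendCost hm

lemma potential_add_mul_le (hc : ContinuousOn τ (Set.Ici 0)) (hm : MonotoneOn τ (Set.Ici 0))
    (f g : ℝ) : potential τ f + (g - f) * extendCost τ f ≤ potential τ g := by
  have hint : ∀ u v, IntervalIntegrable (extendCost τ) MeasureTheory.volume u v :=
    fun u v => (continuous_extendCost hc).intervalIntegrable u v
  have hsub : potential τ g - potential τ f = ∫ z in f..g, extendCost τ z :=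
    intervalIntegral.integral_interval_sub_left (hint 0 g) (hint 0 f)
  rcases le_total f g with hfg | hgf
  · have := intervalIntegral.integral_mono_on hfg intervalIntegrable_const (hint f g)
      fun z hz => monotone_extendCost hm hz.1
    simp only [intervalIntegral.integral_const, smul_eq_mul] at this
    linarith
  · have := intervalIntegral.integral_mono_on hgf (hint g f) intervalIntegrable_const
      fun z hz => monotone_extendCost hm hz.2
    simp only [intervalIntegral.integral_const, smul_eq_mul] at this
    rw [intervalIntegral.integral_symm] at hsub
    linarith

lemma potential_sub_le_mul_abs (hc : ContinuousOn τ (Set.Ici 0))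
    (hm : MonotoneOn τ (Set.Ici 0)) {lo hi w : ℝ} (hw : w ∈ Set.Icc lo hi) (u : ℝ) :
    potential τ w - potential τ u ≤ max |extendCost τ lo| |extendCost τ hi| * |w - u| := by
  have hbound : |extendCost τ w| ≤ max |extendCost τ lo| |extendCost τ hi| :=
    abs_le_max_abs_abs (monotone_extendCost hm hw.1) (monotone_extendCost hm hw.2)
  calc potential τ w - potential τ u ≤ (w - u) * extendCost τ w := by
        linarith [potential_add_mul_le hc hm w u]
    _ ≤ |w - u| * |extendCost τ w| := by rw [← abs_mul]; exact le_abs_self _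
    _ ≤ _ := by rw [mul_comm]; exact mul_le_mul_of_nonneg_right hbound (abs_nonneg _)

end Potential

section Conjugate

/-- The Fenchel conjugate over `f ≥ 0`. The `sSup` is the junk value `0` when the set is
unbounded; for the potentials below it is bounded because `τ → ∞`. -/
noncomputable def fenchelConj (φ : ℝ → ℝ) (t : ℝ) : ℝ :=
  sSup {v | ∃ f, 0 ≤ f ∧ v = f * t - φ f}

lemma fenchelConj_congr {φ ψ : ℝ → ℝ} (h : Set.EqOn φ ψ (Set.Ici 0)) (t : ℝ) :
    fenchelConj φ t = fenchelConj ψ t := by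
  unfold fenchelConj
  congr 1
  ext v
  exact exists_congr fun f => and_congr_right fun hf => by rw [h hf]

variable {τ : ℝ → ℝ} {f t : ℝ}

lemma bddAbove_mul_sub_potential (hc : ContinuousOn τ (Set.Ici 0))
    (hm : MonotoneOn τ (Set.Ici 0)) (hinf : Tendsto τ atTop atTop) (t : ℝ) :
    BddAbove {v | ∃ f, 0 ≤ f ∧ v = f * t - potential τ f} := by
  obtain ⟨f₀, hτf₀, hf₀⟩ := ((tendsto_atTop.1 hinf t).and (eventually_ge_atTop 0)).exists
  have hcont : Continuous fun f => f * t - potential τ f :=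
    (continuous_id.mul continuous_const).sub (continuous_potential hc)
  obtain ⟨B, hB⟩ := (isCompact_Icc (a := 0) (b := f₀)).bddAbove_image hcont.continuousOn
  refine ⟨B, ?_⟩
  rintro _ ⟨f, hf, rfl⟩
  rcases le_total f f₀ with h | h
  · exact hB ⟨f, ⟨hf, h⟩, rfl⟩
  · -- beyond `f₀` the tangent line of `potential τ` has slope `τ f₀ ≥ t`
    have htangent := potential_add_mul_le hc hm f₀ f
    have hslope : 0 ≤ (f - f₀) * (extendCost τ f₀ - t) :=
      mul_nonneg (by linarith) (by rw [extendCost_of_nonneg hf₀]; linarith)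
    exact le_trans (by nlinarith) (hB ⟨f₀, ⟨hf₀, le_rfl⟩, rfl⟩)

lemma mul_sub_potential_le_fenchelConj (hc : ContinuousOn τ (Set.Ici 0))
    (hm : MonotoneOn τ (Set.Ici 0)) (hinf : Tendsto τ atTop atTop) (hf : 0 ≤ f) :
    f * t - potential τ f ≤ fenchelConj (potential τ) t :=
  le_csSup (bddAbove_mul_sub_potential hc hm hinf t) ⟨f, hf, rfl⟩

lemma fenchelConj_potential_extendCost (hc : ContinuousOn τ (Set.Ici 0))
    (hm : MonotoneOn τ (Set.Ici 0)) (hf : 0 ≤ f) :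
    fenchelConj (potential τ) (extendCost τ f) = f * extendCost τ f - potential τ f :=
  IsGreatest.csSup_eq ⟨⟨f, hf, rfl⟩, by
    rintro _ ⟨g, -, rfl⟩
    linarith [potential_add_mul_le hc hm f g]⟩

lemma eq_extendCost_of_fenchelConj_eq (hc : ContinuousOn τ (Set.Ici 0))
    (hm : MonotoneOn τ (Set.Ici 0)) (hinf : Tendsto τ atTop atTop) (hf : 0 < f)
    (h : fenchelConj (potential τ) t = f * t - potential τ f) : t = extendCost τ f := by
  have hmax : IsLocalMax (fun g => g * t - potential τ g) f := by
    filter_upwards [Ioi_mem_nhds hf] with g hg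
    exact h ▸ mul_sub_potential_le_fenchelConj hc hm hinf (le_of_lt hg)
  have hderiv : HasDerivAt (fun g => g * t - potential τ g) (t - extendCost τ f) f := by
    simpa using ((hasDerivAt_id f).mul_const t).fun_sub (hasDerivAt_potential hc f)
  linarith [hmax.hasDerivAt_eq_zero hderiv]

end Conjugate

section Gibbs

variable {P : Type*} [Fintype P] {x : P → ℝ} {d : ℝ}

/-- Gibbs' variational inequality, for weights of total mass `d`. -/
lemma sum_mul_sub_log_le_mul_log_sum_exp (hd : 0 < d) (hx : ∀ p, 0 ≤ x p)
    (hsum : ∑ p, x p = d) (y : P → ℝ) :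
    ∑ p, x p * (y p - log (x p / d)) ≤ d * log (∑ p, exp (y p)) := by
  have hne : (univ : Finset P).Nonempty :=
    nonempty_of_sum_ne_zero (s := univ) (f := x) (hsum ▸ hd.ne')
  set Z := ∑ p, exp (y p)
  have hZ : 0 < Z := sum_pos (fun p _ => exp_pos _) hne
  -- `log u ≤ u - 1` at `u = d exp (y p) / (x p Z)`
  have key : ∀ p, x p * (y p - log (x p / d) - log Z) ≤ d * exp (y p) / Z - x p := by
    intro p
    rcases (hx p).eq_or_lt with h | h
    · rw [← h]
      simpa using by positivity
    · have hlog : log (d * exp (y p) / (x p * Z)) = y p - log (x p / d) - log Z := by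
        rw [log_div (by positivity) (by positivity), log_mul hd.ne' (exp_pos _).ne', log_exp,
          log_mul h.ne' hZ.ne', log_div h.ne' hd.ne']
        ring
      calc x p * (y p - log (x p / d) - log Z)
          ≤ x p * (d * exp (y p) / (x p * Z) - 1) := by
            rw [← hlog]
            exact mul_le_mul_of_nonneg_left (log_le_sub_one_of_pos (by positivity)) h.le
        _ = d * exp (y p) / Z - x p := by field_simp
  have htotal := sum_le_sum fun p (_ : p ∈ univ) => key p
  simp only [mul_sub, sum_sub_distrib, ← sum_mul, ← mul_sum, ← sum_div, hsum] at htotal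
  rw [mul_div_assoc, div_self hZ.ne'] at htotal
  simp only [mul_sub, sum_sub_distrib]
  linarith

lemma sum_mul_sub_log_eq_mul_log_sum_exp (hd : 0 < d) (hx : ∀ p, 0 < x p)
    (hsum : ∑ p, x p = d) {y : P → ℝ} {c : ℝ} (hc : ∀ p, log (x p / d) - y p = c) :
    ∑ p, x p * (y p - log (x p / d)) = d * log (∑ p, exp (y p)) := by
  have hexp : ∀ p, exp (y p) = x p / d * exp (-c) := fun p => by
    rw [show y p = log (x p / d) + -c by linarith [hc p], exp_add,
      exp_log (div_pos (hx p) hd)]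
  simp only [hexp, ← sum_mul, ← sum_div, hsum, div_self hd.ne', one_mul, log_exp]
  rw [sum_congr rfl fun p _ => show x p * (y p - log (x p / d)) = x p * -c by rw [← hc p]; ring,
    ← sum_mul, hsum]

end Gibbs

section Model

variable {P E : Type*} [Fintype P]

def simplex (P : Type*) [Fintype P] (d : ℝ) : Set (P → ℝ) := {x | (∀ p, 0 ≤ x p) ∧ ∑ p, x p = d}

lemma convex_simplex (d : ℝ) : Convex ℝ (simplex P d) := by
  rintro x ⟨hx0, hxd⟩ y ⟨hy0, hyd⟩ θ η hθ hη hθη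
  refine ⟨fun p => ?_, ?_⟩
  · simp only [Pi.add_apply, Pi.smul_apply, smul_eq_mul]
    have := hx0 p; have := hy0 p; positivity
  · simp only [Pi.add_apply, Pi.smul_apply, smul_eq_mul, sum_add_distrib, ← mul_sum, hxd, hyd]
    rw [← add_mul, hθη, one_mul]

lemma isCompact_simplex (d : ℝ) : IsCompact (simplex P d) := by
  refine (isCompact_Icc (a := fun _ => 0) (b := fun _ => d)).of_isClosed_subset ?_ ?_
  · simp only [simplex, Set.ofPred_and, Set.ofPred_forall]
    exact (isClosed_iInter fun p => isClosed_le continuous_const (continuous_apply p)).inter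
      (isClosed_eq (continuous_finsetSum _ fun p _ => continuous_apply p) continuous_const)
  · rintro x ⟨hx0, hxd⟩
    exact ⟨hx0, fun p => hxd ▸ single_le_sum (fun r _ => hx0 r) (mem_univ p)⟩

lemma simplex_nonempty [Nonempty P] {d : ℝ} (hd : 0 ≤ d) : (simplex P d).Nonempty := by
  have hcard : (0 : ℝ) < Fintype.card P := by exact_mod_cast Fintype.card_pos
  refine ⟨fun _ => d / Fintype.card P, fun _ => by positivity, ?_⟩
  rw [sum_const, card_univ, nsmul_eq_mul, mul_div_cancel₀ _ hcard.ne']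

def transfer [DecidableEq P] (q r : P) (s : ℝ) (x : P → ℝ) : P → ℝ :=
  x + s • (Pi.single q 1 - Pi.single r 1)

lemma transfer_mem_simplex [DecidableEq P] {d s : ℝ} {x : P → ℝ} {q r : P}
    (hx : x ∈ simplex P d) (hqr : q ≠ r) (hq : 0 ≤ x q + s) (hr : 0 ≤ x r - s) :
    transfer q r s x ∈ simplex P d := by
  unfold transfer
  refine ⟨fun p => ?_, ?_⟩
  · rcases eq_or_ne p q with rfl | hpq
    · simpa [hqr] using hq
    rcases eq_or_ne p r with rfl | hpr
    · simpa [hpq] using hr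
    · simpa [hpq, hpr] using hx.1 p
  · simp [sum_add_distrib, hx.2, ← mul_sum, sum_sub_distrib]

lemma sum_comp_transfer [DecidableEq P] (g : ℝ → ℝ) (x : P → ℝ) (s : ℝ) {q r : P}
    (hqr : q ≠ r) :
    ∑ p, g (transfer q r s x p) =
      ∑ p, g (x p) + (g (x q + s) - g (x q)) + (g (x r - s) - g (x r)) := by
  have hdiff : ∑ p, (g (transfer q r s x p) - g (x p)) =
      (g (x q + s) - g (x q)) + (g (x r - s) - g (x r)) := by
    rw [Fintype.sum_eq_add q r hqr fun p hp => by simp [transfer, hp.1, hp.2]]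
    simp [transfer, hqr, hqr.symm, sub_eq_add_neg]
  rw [sum_sub_distrib] at hdiff
  linarith

def edgeFlow (a : P → E → ℝ) (e : E) : (P → ℝ) →ₗ[ℝ] ℝ where
  toFun x := ∑ p, a p e * x p
  map_add' x y := by simp [mul_add, sum_add_distrib]
  map_smul' c x := by simp [mul_sum, mul_left_comm]

variable {a : P → E → ℝ}

lemma edgeFlow_apply (e : E) (x : P → ℝ) : edgeFlow a e x = ∑ p, a p e * x p := rfl

lemma edgeFlow_single [DecidableEq P] (e : E) (q : P) :
    edgeFlow a e (Pi.single q 1) = a q e := by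
  simp [edgeFlow_apply, Pi.single_apply]

lemma edgeFlow_transfer [DecidableEq P] (e : E) (q r : P) (s : ℝ) (x : P → ℝ) :
    edgeFlow a e (transfer q r s x) = edgeFlow a e x + s * (a q e - a r e) := by
  simp [transfer, edgeFlow_single]

lemma edgeFlow_nonneg (ha0 : ∀ p e, 0 ≤ a p e) {x : P → ℝ} (hx : ∀ p, 0 ≤ x p) (e : E) :
    0 ≤ edgeFlow a e x :=
  sum_nonneg fun p _ => mul_nonneg (ha0 p e) (hx p)

lemma edgeFlow_mem_Icc (ha0 : ∀ p e, 0 ≤ a p e) (ha1 : ∀ p e, a p e ≤ 1) {d : ℝ} {x : P → ℝ}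
    (hx : x ∈ simplex P d) (e : E) : edgeFlow a e x ∈ Set.Icc 0 d :=
  ⟨edgeFlow_nonneg ha0 hx.1 e,
    hx.2 ▸ sum_le_sum fun p _ => mul_le_of_le_one_left (hx.1 p) (ha1 p e)⟩

lemma edgeFlow_pos (ha0 : ∀ p e, 0 ≤ a p e) {x : P → ℝ} (hx : ∀ p, 0 ≤ x p) {p : P} {e : E}
    (hpe : 0 < a p e) (hxp : 0 < x p) : 0 < edgeFlow a e x :=
  (mul_pos hpe hxp).trans_le <|
    single_le_sum (f := fun p => a p e * x p) (fun p _ => mul_nonneg (ha0 p e) (hx p)) (mem_univ p)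

lemma sum_mul_sum_eq_sum_edgeFlow_mul [Fintype E] (x : P → ℝ) (t : E → ℝ) :
    ∑ p, x p * ∑ e, a p e * t e = ∑ e, edgeFlow a e x * t e := by
  simp only [edgeFlow_apply, mul_sum, sum_mul]
  rw [sum_comm]
  exact sum_congr rfl fun e _ => sum_congr rfl fun p _ => by ring

lemma potential_edgeFlow_transfer_sub_le [DecidableEq P]
    (ha0 : ∀ p e, 0 ≤ a p e) (ha1 : ∀ p e, a p e ≤ 1)
    {τ : E → ℝ → ℝ} (hc : ∀ e, ContinuousOn (τ e) (Set.Ici 0))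
    (hm : ∀ e, MonotoneOn (τ e) (Set.Ici 0)) {d s : ℝ} {x : P → ℝ} {q r : P} (hs : 0 ≤ s)
    (hy : transfer q r s x ∈ simplex P d) (e : E) :
    potential (τ e) (edgeFlow a e (transfer q r s x)) - potential (τ e) (edgeFlow a e x) ≤
      max |extendCost (τ e) 0| |extendCost (τ e) d| * s := by
  refine (potential_sub_le_mul_abs (hc e) (hm e) (edgeFlow_mem_Icc ha0 ha1 hy e) _).trans
    (mul_le_mul_of_nonneg_left ?_ ((abs_nonneg _).trans (le_max_left _ _)))
  have hdiff : |a q e - a r e| ≤ 1 := by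
    simpa using abs_sub_le_of_le_of_le (ha0 q e) (ha1 q e) (ha0 r e) (ha1 r e)
  rw [edgeFlow_transfer, add_sub_cancel_left, abs_mul, abs_of_nonneg hs]
  exact mul_le_of_le_one_right hs hdiff

end Model

section Entropy

variable {d : ℝ}

lemma mul_log_div_eq (hd : d ≠ 0) (z : ℝ) : z * log (z / d) = z * log z - z * log d := by
  rcases eq_or_ne z 0 with rfl | hz
  · simp
  · rw [log_div hz hd, mul_sub]

lemma continuous_mul_log_div (hd : d ≠ 0) : Continuous fun z => z * log (z / d) := by
  simp only [mul_log_div_eq hd]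
  exact continuous_mul_log.sub (continuous_id.mul continuous_const)

lemma strictConvexOn_mul_log_div (hd : d ≠ 0) :
    StrictConvexOn ℝ (Set.Ici 0) fun z => z * log (z / d) := by
  simp only [mul_log_div_eq hd]
  exact strictConvexOn_mul_log.sub_concaveOn
    ⟨convex_Ici 0, fun _ _ _ _ _ _ _ _ _ => le_of_eq (by simp only [smul_eq_mul]; ring)⟩

lemma hasDerivAt_mul_log_div (hd : d ≠ 0) {z : ℝ} (hz : z ≠ 0) :
    HasDerivAt (fun z => z * log (z / d)) (log (z / d) + 1) z := by
  simp only [mul_log_div_eq hd]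
  rw [log_div hz hd, sub_add_eq_add_sub]
  exact (hasDerivAt_mul_log hz).fun_sub (by simpa using (hasDerivAt_id z).mul_const (log d))

/-- The entropy change when mass `s` moves from a path carrying `A` to an empty path: it is of
order `s log s`, which beats any linear cost for small `s`. -/
lemma mul_log_div_add_sub_le (hd : 0 < d) {s A : ℝ} (hs : 0 < s) (hsA : s < A) :
    s * log (s / d) + (A - s) * log ((A - s) / d) - A * log (A / d) ≤ s * log (s / A) := by
  have hmono : (A - s) * log ((A - s) / d) ≤ (A - s) * log (A / d) :=
    mul_le_mul_of_nonneg_left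
      (log_le_log (div_pos (by linarith) hd) (div_le_div_of_nonneg_right (by linarith) hd.le))
      (by linarith)
  have hlog : log (s / A) = log (s / d) - log (A / d) := by
    rw [← log_div (by positivity) (div_pos (by linarith) hd).ne',
      div_div_div_cancel_right₀ hd.ne']
  rw [hlog]
  linarith

end Entropy

lemma strictConvexOn_sum_apply {ι : Type*} [Fintype ι] {s : Set ℝ} {g : ℝ → ℝ}
    (hg : StrictConvexOn ℝ s g) :
    StrictConvexOn ℝ (Set.univ.pi fun _ : ι => s) fun x => ∑ i, g (x i) := by
  refine ⟨convex_pi fun i _ => hg.1, fun x hx y hy hxy θ η hθ hη hθη => ?_⟩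
  obtain ⟨i, hi⟩ := Function.ne_iff.1 hxy
  simp only [Pi.add_apply, Pi.smul_apply, smul_eq_mul, mul_sum, ← sum_add_distrib]
  refine sum_lt_sum (fun j _ => ?_) ⟨i, mem_univ i, ?_⟩
  · exact hg.convexOn.2 (hx j trivial) (hy j trivial) hθ.le hη.le hθη
  · exact hg.2 (hx i trivial) (hy i trivial) hi hθ hη hθη

section Primal

variable {P E : Type*} [Fintype P] [Fintype E]

noncomputable def primalObj (a : P → E → ℝ) (d γ : ℝ) (τ : E → ℝ → ℝ) (x : P → ℝ) : ℝ :=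
  ∑ e, potential (τ e) (edgeFlow a e x) + γ * ∑ p, x p * log (x p / d)

variable {a : P → E → ℝ} {d γ : ℝ} {τ : E → ℝ → ℝ} {x : P → ℝ}

lemma continuous_primalObj (hd : d ≠ 0) (hc : ∀ e, ContinuousOn (τ e) (Set.Ici 0)) :
    Continuous (primalObj a d γ τ) :=
  (continuous_finsetSum _ fun e _ => (continuous_potential (hc e)).comp
      (edgeFlow a e).continuous_of_finiteDimensional).add
    (continuous_const.mul (continuous_finsetSum _ fun p _ =>
      (continuous_mul_log_div hd).comp (continuous_apply p)))

lemma exists_isMinOn_primalObj [Nonempty P] (hd : 0 < d)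
    (hc : ∀ e, ContinuousOn (τ e) (Set.Ici 0)) :
    ∃ x ∈ simplex P d, IsMinOn (primalObj a d γ τ) (simplex P d) x :=
  (isCompact_simplex d).exists_isMinOn (simplex_nonempty hd.le)
    (continuous_primalObj hd.ne' hc).continuousOn

lemma strictConvexOn_primalObj (hd : d ≠ 0) (hγ : 0 < γ)
    (hc : ∀ e, ContinuousOn (τ e) (Set.Ici 0)) (hm : ∀ e, MonotoneOn (τ e) (Set.Ici 0)) :
    StrictConvexOn ℝ (simplex P d) (primalObj a d γ τ) := by
  have hent := (strictConvexOn_sum_apply (ι := P) (strictConvexOn_mul_log_div hd)).subset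
    (fun x hx p _ => hx.1 p) (convex_simplex d)
  refine ⟨convex_simplex d, fun x hx y hy hxy θ η hθ hη hθη => ?_⟩
  have hedge : ∀ e, potential (τ e) (edgeFlow a e (θ • x + η • y)) ≤
      θ * potential (τ e) (edgeFlow a e x) + η * potential (τ e) (edgeFlow a e y) := fun e => by
    simpa only [map_add, map_smul, smul_eq_mul] using
      (convexOn_potential (hc e) (hm e)).2 trivial trivial hθ.le hη.le hθη
  have hsum := sum_le_sum fun e (_ : e ∈ univ) => hedge e
  have hentropy := mul_lt_mul_of_pos_left (hent.2 hx hy hxy hθ hη hθη) hγ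
  rw [sum_add_distrib, ← mul_sum, ← mul_sum] at hsum
  simp only [smul_eq_mul] at hentropy ⊢
  unfold primalObj
  linear_combination hsum + hentropy

lemma pos_of_isMinOn_primalObj (ha0 : ∀ p e, 0 ≤ a p e) (ha1 : ∀ p e, a p e ≤ 1)
    (hd : 0 < d) (hγ : 0 < γ)
    (hc : ∀ e, ContinuousOn (τ e) (Set.Ici 0)) (hm : ∀ e, MonotoneOn (τ e) (Set.Ici 0))
    (hx : x ∈ simplex P d) (hmin : IsMinOn (primalObj a d γ τ) (simplex P d) x) (q : P) :
    0 < x q := by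
  classical
  by_contra! hq
  replace hq : x q = 0 := le_antisymm hq (hx.1 q)
  obtain ⟨r, -, hr⟩ : ∃ r ∈ univ, 0 < x r := by
    simpa using exists_lt_of_sum_lt (s := univ) (f := 0) (g := x) (by simpa [hx.2] using hd)
  have hqr : q ≠ r := by rintro rfl; simp [hq] at hr
  set L := ∑ e, max |extendCost (τ e) 0| |extendCost (τ e) d|
  have hL : 0 ≤ L / γ :=
    div_nonneg (sum_nonneg fun e _ => (abs_nonneg _).trans (le_max_left _ _)) hγ.le
  -- move so little mass `s` from `r` to `q` that the entropy gain `γ s log (s / x r)` beats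
  -- the cost increase `s L`
  set s := x r * exp (-(L / γ) - 1)
  have hs : 0 < s := by positivity
  have hsr : s < x r := mul_lt_of_lt_one_right hr (exp_lt_one_iff.2 (by linarith))
  have hlog : log (s / x r) = -(L / γ) - 1 := by rw [mul_div_cancel_left₀ _ hr.ne', log_exp]
  have hy := transfer_mem_simplex (s := s) hx hqr (by linarith) (by linarith)
  have hedge := sum_le_sum fun e (_ : e ∈ univ) =>
    potential_edgeFlow_transfer_sub_le ha0 ha1 hc hm hs.le hy e
  have hentropy := mul_le_mul_of_nonneg_left (mul_log_div_add_sub_le hd hs hsr) hγ.le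
  have hle := hmin hy
  simp only [Set.mem_ofPred_eq, primalObj] at hle
  rw [sum_comp_transfer (fun z => z * log (z / d)) x s hqr, hq] at hle
  rw [sum_sub_distrib, ← sum_mul] at hedge
  have hgain : γ * (s * log (s / x r)) = -(L * s) - γ * s := by
    rw [hlog]
    field_simp
  simp only [zero_add, zero_mul, sub_zero] at hle
  linarith [mul_pos hγ hs]

lemma hasDerivAt_primalObj_add_smul (hd : d ≠ 0) (hc : ∀ e, ContinuousOn (τ e) (Set.Ici 0))
    (hx : ∀ p, 0 < x p) (v : P → ℝ) :
    HasDerivAt (fun s : ℝ => primalObj a d γ τ (x + s • v))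
      (∑ e, edgeFlow a e v * extendCost (τ e) (edgeFlow a e x) +
        γ * ∑ p, v p * (log (x p / d) + 1)) 0 := by
  have hline : ∀ c w : ℝ, HasDerivAt (fun s : ℝ => c + s * w) w 0 := fun c w => by
    simpa using ((hasDerivAt_id (0 : ℝ)).mul_const w).const_add c
  have hedge : ∀ e ∈ univ, HasDerivAt (fun s : ℝ => potential (τ e) (edgeFlow a e (x + s • v)))
      (edgeFlow a e v * extendCost (τ e) (edgeFlow a e x)) 0 := fun e _ => by
    simp only [map_add, map_smul, smul_eq_mul]
    exact (hasDerivAt_potential (hc e) _).scomp_of_eq 0 (hline _ _) (by simp)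
  have hent : ∀ p ∈ univ, HasDerivAt (fun s : ℝ => (x + s • v) p * log ((x + s • v) p / d))
      (v p * (log (x p / d) + 1)) 0 := fun p _ => by
    simp only [Pi.add_apply, Pi.smul_apply, smul_eq_mul]
    exact (hasDerivAt_mul_log_div hd (hx p).ne').scomp_of_eq 0 (hline _ _) (by simp)
  exact (HasDerivAt.fun_sum hedge).add ((HasDerivAt.fun_sum hent).const_mul γ)

/-- The first-order optimality condition: the Gibbs form `x p ∝ exp (-(cost of path p) / γ)`. -/
lemma exists_log_sub_eq_of_isMinOn_primalObj [Nonempty P] (hd : d ≠ 0)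
    (hγ : γ ≠ 0) (hc : ∀ e, ContinuousOn (τ e) (Set.Ici 0)) (hx : x ∈ simplex P d)
    (hpos : ∀ p, 0 < x p) (hmin : IsMinOn (primalObj a d γ τ) (simplex P d) x) :
    ∃ c, ∀ p, log (x p / d) - -(∑ e, a p e * extendCost (τ e) (edgeFlow a e x)) / γ = c := by
  classical
  set g : P → ℝ := fun p => ∑ e, a p e * extendCost (τ e) (edgeFlow a e x) + γ * log (x p / d)
  suffices h : ∀ p q, g p = g q by
    obtain ⟨p₀⟩ := ‹Nonempty P›
    refine ⟨g p₀ / γ, fun p => ?_⟩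
    rw [← h p p₀]
    field_simp
    ring
  intro p q
  rcases eq_or_ne p q with rfl | hpq
  · rfl
  have hlocal : IsLocalMin (fun s => primalObj a d γ τ (transfer p q s x)) 0 := by
    have hδ : 0 < min (x p) (x q) := lt_min (hpos p) (hpos q)
    filter_upwards [Ioo_mem_nhds (neg_neg_iff_pos.2 hδ) hδ] with s hs
    simp only [transfer, zero_smul, add_zero]
    exact hmin (transfer_mem_simplex hx hpq
      (by linarith [hs.1, min_le_left (x p) (x q)]) (by linarith [hs.2, min_le_right (x p) (x q)]))
  have hzero := hlocal.hasDerivAt_eq_zero (hasDerivAt_primalObj_add_smul hd hc hpos _)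
  simp [map_sub, edgeFlow_single, sub_mul, sum_sub_distrib, Pi.single_apply] at hzero
  simp only [g]
  linear_combination hzero

end Primal

section Duality

variable {P E : Type*} [Fintype P] [Fintype E]

noncomputable def dualObj (a : P → E → ℝ) (d γ : ℝ) (τ : E → ℝ → ℝ) (t : E → ℝ) : ℝ :=
  γ * d * log (∑ p, exp (-(∑ e, a p e * t e) / γ)) + ∑ e, fenchelConj (potential (τ e)) (t e)

variable {a : P → E → ℝ} {d γ : ℝ} {τ : E → ℝ → ℝ} {x : P → ℝ}

lemma neg_primalObj_eq (hγ : γ ≠ 0) (x : P → ℝ) (t : E → ℝ) :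
    -primalObj a d γ τ x = γ * ∑ p, x p * (-(∑ e, a p e * t e) / γ - log (x p / d)) +
      ∑ e, (edgeFlow a e x * t e - potential (τ e) (edgeFlow a e x)) := by
  have h : γ * ∑ p, x p * (-(∑ e, a p e * t e) / γ - log (x p / d)) =
      -∑ p, x p * ∑ e, a p e * t e - γ * ∑ p, x p * log (x p / d) := by
    rw [mul_sum, mul_sum, ← sum_neg_distrib, ← sum_sub_distrib]
    exact sum_congr rfl fun p _ => by field_simp
  rw [h, sum_mul_sum_eq_sum_edgeFlow_mul, sum_sub_distrib, primalObj]
  ring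

lemma neg_primalObj_le_dualObj (ha0 : ∀ p e, 0 ≤ a p e) (hd : 0 < d) (hγ : 0 < γ)
    (hc : ∀ e, ContinuousOn (τ e) (Set.Ici 0)) (hm : ∀ e, MonotoneOn (τ e) (Set.Ici 0))
    (hinf : ∀ e, Tendsto (τ e) atTop atTop) (hx : x ∈ simplex P d) (t : E → ℝ) :
    -primalObj a d γ τ x ≤ dualObj a d γ τ t := by
  rw [neg_primalObj_eq hγ.ne' x t, dualObj, mul_assoc]
  gcongr ?_ + ?_
  · exact mul_le_mul_of_nonneg_left (sum_mul_sub_log_le_mul_log_sum_exp hd hx.1 hx.2 _) hγ.le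
  · exact sum_le_sum fun e _ =>
      mul_sub_potential_le_fenchelConj (hc e) (hm e) (hinf e) (edgeFlow_nonneg ha0 hx.1 e)

/-- Equality in weak duality forces equality in every Fenchel–Young inequality, which pins down
`t` wherever the edge flow is positive. -/
lemma eq_extendCost_of_dualObj_le (ha0 : ∀ p e, 0 ≤ a p e) (hd : 0 < d) (hγ : 0 < γ)
    (hc : ∀ e, ContinuousOn (τ e) (Set.Ici 0)) (hm : ∀ e, MonotoneOn (τ e) (Set.Ici 0))
    (hinf : ∀ e, Tendsto (τ e) atTop atTop) (hx : x ∈ simplex P d)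
    (hflow : ∀ e, 0 < edgeFlow a e x) {t : E → ℝ}
    (h : dualObj a d γ τ t ≤ -primalObj a d γ τ x) (e : E) :
    t e = extendCost (τ e) (edgeFlow a e x) := by
  refine eq_extendCost_of_fenchelConj_eq (hc e) (hm e) (hinf e) (hflow e) ?_
  have hyoung : ∀ e ∈ univ, edgeFlow a e x * t e - potential (τ e) (edgeFlow a e x) ≤
      fenchelConj (potential (τ e)) (t e) := fun e _ =>
    mul_sub_potential_le_fenchelConj (hc e) (hm e) (hinf e) (edgeFlow_nonneg ha0 hx.1 e)
  have hgibbs := mul_le_mul_of_nonneg_left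
    (sum_mul_sub_log_le_mul_log_sum_exp hd hx.1 hx.2 fun p => -(∑ e, a p e * t e) / γ) hγ.le
  rw [neg_primalObj_eq hγ.ne' x t, dualObj] at h
  have hsum : ∑ e, fenchelConj (potential (τ e)) (t e) ≤
      ∑ e, (edgeFlow a e x * t e - potential (τ e) (edgeFlow a e x)) := by
    linarith
  exact ((sum_eq_sum_iff_of_le hyoung).1 (le_antisymm (sum_le_sum hyoung) hsum) e
    (mem_univ e)).symm

lemma dualObj_extendCost_edgeFlow (ha0 : ∀ p e, 0 ≤ a p e) (hd : 0 < d) (hγ : γ ≠ 0)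
    (hc : ∀ e, ContinuousOn (τ e) (Set.Ici 0)) (hm : ∀ e, MonotoneOn (τ e) (Set.Ici 0))
    (hx : x ∈ simplex P d) (hpos : ∀ p, 0 < x p)
    (hgibbs : ∃ c, ∀ p, log (x p / d) - -(∑ e, a p e * extendCost (τ e) (edgeFlow a e x)) / γ = c) :
    dualObj a d γ τ (fun e => extendCost (τ e) (edgeFlow a e x)) = -primalObj a d γ τ x := by
  obtain ⟨c, hc'⟩ := hgibbs
  rw [neg_primalObj_eq hγ x, dualObj, mul_assoc,
    sum_mul_sub_log_eq_mul_log_sum_exp hd hpos hx.2 hc']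
  congr 1
  exact sum_congr rfl fun e _ =>
    fenchelConj_potential_extendCost (hc e) (hm e) (edgeFlow_nonneg ha0 hx.1 e)

theorem exists_primal_dual_optimum [Nonempty P] (ha0 : ∀ p e, 0 ≤ a p e)
    (ha1 : ∀ p e, a p e ≤ 1) (hcover : ∀ e, ∃ p, 0 < a p e) (hd : 0 < d) (hγ : 0 < γ)
    (hc : ∀ e, ContinuousOn (τ e) (Set.Ici 0)) (hm : ∀ e, MonotoneOn (τ e) (Set.Ici 0))
    (hinf : ∀ e, Tendsto (τ e) atTop atTop) :
    ∃ x ∈ simplex P d, IsMinOn (primalObj a d γ τ) (simplex P d) x ∧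
      IsMinOn (dualObj a d γ τ) Set.univ (fun e => extendCost (τ e) (edgeFlow a e x)) ∧
      ∀ t, IsMinOn (dualObj a d γ τ) Set.univ t →
        t = fun e => extendCost (τ e) (edgeFlow a e x) := by
  obtain ⟨x, hxS, hmin⟩ := exists_isMinOn_primalObj (a := a) (γ := γ) hd hc
  have hpos := pos_of_isMinOn_primalObj ha0 ha1 hd hγ hc hm hxS hmin
  have hflow : ∀ e, 0 < edgeFlow a e x := fun e =>
    let ⟨p, hp⟩ := hcover e
    edgeFlow_pos ha0 hxS.1 hp (hpos p)
  have hstrong := dualObj_extendCost_edgeFlow ha0 hd hγ.ne' hc hm hxS hpos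
    (exists_log_sub_eq_of_isMinOn_primalObj hd.ne' hγ.ne' hc hxS hpos hmin)
  refine ⟨x, hxS, hmin, fun t _ => ?_, fun t ht => funext fun e => ?_⟩
  · exact hstrong ▸ neg_primalObj_le_dualObj ha0 hd hγ hc hm hinf hxS t
  · exact eq_extendCost_of_dualObj_le ha0 hd hγ hc hm hinf hxS hflow
      (hstrong ▸ ht (Set.mem_univ _)) e

end Duality

/-- in the strictly increasing cost case (each edge lying on at least
one path, so the dual is coercive), the dual problem
`min_t [γ d log (∑ p, exp (-⟨a_p, t⟩/γ)) + ∑ e, σ_e*(t_e)]` has a unique solution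
`t*`, whose components satisfy `t*_e = τ_e(f*_e)` where `f*` is the edge flow of the
(unique) primal optimum. -/
theorem stmt18 (P : Type*) [Fintype P] [Nonempty P] (n : ℕ)
    (a : P → Fin n → ℝ) (ha : ∀ p e, a p e = 0 ∨ a p e = 1)
    (hcover : ∀ e, ∃ p, a p e = 1)
    (d γ : ℝ) (hd : 0 < d) (hγ : 0 < γ)
    (τ : Fin n → ℝ → ℝ)
    (hτcont : ∀ e, ContinuousOn (τ e) (Set.Ici 0))
    (hτmono : ∀ e, StrictMonoOn (τ e) (Set.Ici 0))
    (hτinf : ∀ e, Tendsto (τ e) atTop atTop)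
    (σ : Fin n → ℝ → ℝ) (hσ : ∀ e f, σ e f = ∫ z in (0:ℝ)..f, τ e z)
    (σs : Fin n → ℝ → ℝ)
    (hσs : ∀ e t, σs e t = sSup {v : ℝ | ∃ f, 0 ≤ f ∧ v = f * t - σ e f})
    (D : (Fin n → ℝ) → ℝ)
    (hD : ∀ t, D t = γ * d * Real.log (∑ p, Real.exp (-(∑ e, a p e * t e) / γ)) +
      ∑ e, σs e (t e))
    (Pobj : (P → ℝ) → ℝ)
    (hPobj : ∀ x, Pobj x = ∑ e, σ e (∑ p, a p e * x p) +
      γ * ∑ p, x p * Real.log (x p / d))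
    (S : Set (P → ℝ)) (hS : S = {x : P → ℝ | (∀ p, 0 ≤ x p) ∧ ∑ p, x p = d}) :
    ∃ (tstar : Fin n → ℝ) (xstar : P → ℝ),
      (∀ t, D tstar ≤ D t) ∧
      (∀ t, (∀ s, D t ≤ D s) → t = tstar) ∧
      xstar ∈ S ∧ (∀ x ∈ S, Pobj xstar ≤ Pobj x) ∧
      (∀ x ∈ S, (∀ y ∈ S, Pobj x ≤ Pobj y) → x = xstar) ∧
      (∀ e, tstar e = τ e (∑ p, a p e * xstar p)) := by
  change S = simplex P d at hS
  subst hS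
  have ha0 : ∀ p e, 0 ≤ a p e := fun p e => by rcases ha p e with h | h <;> simp [h]
  have ha1 : ∀ p e, a p e ≤ 1 := fun p e => by rcases ha p e with h | h <;> simp [h]
  have hτmono' : ∀ e, MonotoneOn (τ e) (Set.Ici 0) := fun e => (hτmono e).monotoneOn
  have hσ' : ∀ e, Set.EqOn (σ e) (potential (τ e)) (Set.Ici 0) := fun e f hf =>
    (hσ e f).trans (potential_eqOn (τ e) hf)
  have hP : ∀ x ∈ simplex P d, Pobj x = primalObj a d γ τ x := fun x hx => by
    rw [hPobj, primalObj]
    congr 1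
    exact sum_congr rfl fun e _ => hσ' e (edgeFlow_nonneg ha0 hx.1 e)
  have hσs' : ∀ e t, σs e t = fenchelConj (potential (τ e)) t := fun e t =>
    (hσs e t).trans (fenchelConj_congr (hσ' e) t)
  obtain rfl : D = dualObj a d γ τ := funext fun t => by simp only [hD, dualObj, hσs']
  have hcover' : ∀ e, ∃ p, 0 < a p e := fun e => (hcover e).imp fun p hp => by simp [hp]
  obtain ⟨x, hxS, hmin, hdual, hdual_unique⟩ :=
    exists_primal_dual_optimum ha0 ha1 hcover' hd hγ hτcont hτmono' hτinf
  have hext : (fun e => extendCost (τ e) (edgeFlow a e x)) = fun e => τ e (∑ p, a p e * x p) :=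
    funext fun e => extendCost_of_nonneg (edgeFlow_nonneg ha0 hxS.1 e)
  rw [hext] at hdual hdual_unique
  refine ⟨_, x, fun t => hdual (Set.mem_univ t), fun t ht => hdual_unique t fun s _ => ht s, hxS,
    fun y hy => (hP x hxS).trans_le ((hmin hy).trans_eq (hP y hy).symm),
    fun y hy hymin => ?_, fun e => rfl⟩
  refine (strictConvexOn_primalObj hd.ne' hγ hτcont hτmono').eq_of_isMinOn
    (fun z hz => ?_) hmin hy hxS
  exact (hP y hy).symm.trans_le ((hymin z hz).trans_eq (hP z hz))
end
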